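/- The quantities c₁ = √((λ−μ−ψ)² + 4λψ) and c₁·c₂ = −(λ−μ−ψ) are functions of d := λ−μ−ψ and f := λψ only; consequently q(x) (defined via c₁ and c₂) depends on (λ, μ, ψ) only through d and f. In particular, if λ−μ−ψ = λ'−μ'−ψ' and λψ = λ'ψ', then q(x) computed from (λ,μ,ψ) equals q(x) computed from (λ',μ',ψ') for all x. -/

import Mathlib

noncomputable def c1 (lam mu psi : ℝ) : ℝ := Real.sqrt ((lam - mu - psi)^2 + 4*lam*psi)

noncomputable def c2 (lam mu psi : ℝ) : ℝ := -(lam - mu - psi) / c1 lam mu psi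

noncomputable def q (lam mu psi : ℝ) (x : ℝ) : ℝ :=
  4 / (2*(1 - (c2 lam mu psi)^2) + Real.exp (-(c1 lam mu psi)*x) * (1 - c2 lam mu psi)^2
    + Real.exp ((c1 lam mu psi)*x) * (1 + c2 lam mu psi)^2)

section

variable {lam mu psi lam' mu' psi' : ℝ}

theorem c1_eq_sqrt_diff_prod (lam mu psi : ℝ) :
    c1 lam mu psi = √((lam - mu - psi) ^ 2 + 4 * (lam * psi)) := by
  rw [c1, mul_assoc]

theorem c1_congr (hd : lam - mu - psi = lam' - mu' - psi') (hf : lam * psi = lam' * psi') :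
    c1 lam mu psi = c1 lam' mu' psi' := by
  rw [c1_eq_sqrt_diff_prod, c1_eq_sqrt_diff_prod, hd, hf]

theorem c2_congr (hd : lam - mu - psi = lam' - mu' - psi') (hf : lam * psi = lam' * psi') :
    c2 lam mu psi = c2 lam' mu' psi' := by
  rw [c2, c2, c1_congr hd hf, hd]

theorem q_congr (hd : lam - mu - psi = lam' - mu' - psi') (hf : lam * psi = lam' * psi') :
    q lam mu psi = q lam' mu' psi' := by
  funext x
  rw [q, q, c1_congr hd hf, c2_congr hd hf]

theorem c1_pos (hf : 0 < lam * psi) : 0 < c1 lam mu psi := by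
  rw [c1_eq_sqrt_diff_prod]
  positivity

theorem c1_mul_c2 (h : c1 lam mu psi ≠ 0) : c1 lam mu psi * c2 lam mu psi = -(lam - mu - psi) :=
  mul_div_cancel₀ _ h

end

theorem stmt5_general (lam mu psi lam' mu' psi' : ℝ)
    (hlam : 0 < lam) (hpsi : 0 < psi)
    (hd : lam - mu - psi = lam' - mu' - psi')
    (hf : lam * psi = lam' * psi') :
    c1 lam mu psi = c1 lam' mu' psi' ∧
    c1 lam mu psi * c2 lam mu psi = -(lam - mu - psi) ∧
    ∀ x : ℝ, q lam mu psi x = q lam' mu' psi' x :=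
  ⟨c1_congr hd hf, c1_mul_c2 (c1_pos (mul_pos hlam hpsi)).ne', congrFun (q_congr hd hf)⟩

theorem stmt5 (lam mu psi lam' mu' psi' : ℝ)
    (hlam : 0 < lam) (hmu : 0 < mu) (hpsi : 0 < psi)
    (hlam' : 0 < lam') (hmu' : 0 < mu') (hpsi' : 0 < psi')
    (hd : lam - mu - psi = lam' - mu' - psi')
    (hf : lam * psi = lam' * psi') :
    c1 lam mu psi = c1 lam' mu' psi' ∧
    c1 lam mu psi * c2 lam mu psi = -(lam - mu - psi) ∧
    ∀ x : ℝ, q lam mu psi x = q lam' mu' psi' x :=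
  stmt5_general lam mu psi lam' mu' psi' hlam hpsi hd hf
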